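/- arXiv:1911.11843 — 2 statements merged into one kernel-verified Lean document; each statement's English description precedes it below -/
import Mathlib

section
/- Let g be a Lie superalgebra, Λ an odd element, and set Λ² := (1/2)[Λ,Λ]. Suppose g decomposes as the direct sum g = ker(ad Λ²) ⊕ im(ad Λ²). If X ∈ g satisfies [Λ, X] ∈ ker(ad Λ²), then X ∈ ker(ad Λ²). -/
/-- `a` is homogeneous of parity `pa` (0 or 1) with respect to the decomposition `g0 ⊕ g1`. -/
def Homog {g : Type*} [AddCommGroup g] [Module ℚ g] (g0 g1 : Submodule ℚ g)
    (a : g) (pa : ℕ) : Prop :=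
  (pa = 0 ∧ a ∈ g0) ∨ (pa = 1 ∧ a ∈ g1)

/-- A Lie superalgebra over ℚ: a ℤ/2-graded module with a bilinear bracket satisfying
super skew-symmetry and the super Jacobi identity on homogeneous elements. -/
structure SuperLie (g : Type*) [AddCommGroup g] [Module ℚ g] where
  bk : g →ₗ[ℚ] g →ₗ[ℚ] g
  g0 : Submodule ℚ g
  g1 : Submodule ℚ g
  compl : IsCompl g0 g1
  bk_parity : ∀ (a b : g) (pa pb : ℕ), Homog g0 g1 a pa → Homog g0 g1 b pb →
      Homog g0 g1 (bk a b) ((pa + pb) % 2)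
  skew : ∀ (a b : g) (pa pb : ℕ), Homog g0 g1 a pa → Homog g0 g1 b pb →
      bk a b = -(((-1 : ℚ) ^ (pa * pb)) • bk b a)
  jacobi : ∀ (a b c : g) (pa pb : ℕ), Homog g0 g1 a pa → Homog g0 g1 b pb →
      bk a (bk b c) = bk (bk a b) c + ((-1 : ℚ) ^ (pa * pb)) • bk b (bk a c)

/-- if g = ker(ad Λ²) ⊕ im(ad Λ²) for Λ odd with Λ² = (1/2)[Λ,Λ],
and [Λ, X] ∈ ker(ad Λ²), then X ∈ ker(ad Λ²). -/
theorem mem_ker_ad_sq_of_bk_mem {g : Type*} [AddCommGroup g] [Module ℚ g]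
    (L : SuperLie g) (Λ : g) (hΛ : Λ ∈ L.g1)
    (hcompl : IsCompl (LinearMap.ker (L.bk (((1 : ℚ) / 2) • L.bk Λ Λ)))
      (LinearMap.range (L.bk (((1 : ℚ) / 2) • L.bk Λ Λ))))
    (X : g) (hX : L.bk Λ X ∈ LinearMap.ker (L.bk (((1 : ℚ) / 2) • L.bk Λ Λ))) :
    X ∈ LinearMap.ker (L.bk (((1 : ℚ) / 2) • L.bk Λ Λ)) := by
  have hH : Homog L.g0 L.g1 Λ 1 := Or.inr ⟨rfl, hΛ⟩
  have key : ∀ c : g, L.bk (((1 : ℚ) / 2) • L.bk Λ Λ) c = L.bk Λ (L.bk Λ c) := by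
    intro c
    have j := L.jacobi Λ Λ c 1 1 hH hH
    simp only [pow_one, mul_one, neg_smul, one_smul] at j
    have h2 : L.bk (L.bk Λ Λ) c = (2 : ℚ) • L.bk Λ (L.bk Λ c) := by
      linear_combination (norm := module) -j
    rw [map_smul, LinearMap.smul_apply, h2, smul_smul]
    norm_num
  simp only [LinearMap.mem_ker] at hX ⊢
  rw [key] at hX ⊢
  -- A X ∈ ker A ∩ range A
  have hker : L.bk (((1 : ℚ) / 2) • L.bk Λ Λ) (L.bk Λ (L.bk Λ X)) = 0 := by
    rw [key]; rw [hX]; simp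
  have hmem : L.bk Λ (L.bk Λ X) ∈ LinearMap.ker (L.bk (((1 : ℚ) / 2) • L.bk Λ Λ)) ⊓
      LinearMap.range (L.bk (((1 : ℚ) / 2) • L.bk Λ Λ)) := by
    refine ⟨hker, ⟨X, ?_⟩⟩
    rw [key]
  have := hcompl.inf_eq_bot
  rw [this] at hmem
  simpa using hmem
end

section
/- Let L be a Lie superalgebra, U ∈ L even, V ∈ L, and ℒ ∈ L, with ad U nilpotent (or the sums finite by a grading). Then Σ_{h≥0} (1/(h+1)!) [(ad U)^h(V), e^{ad U}(ℒ)] = Σ_{h,k≥0} (1/(h+k+1)!) (ad U)^h (ad V) (ad U)^k (ℒ). -/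
/-- The adjoint action `ad U = [U, ·]` as a module endomorphism. -/
noncomputable def adOf {g : Type*} [AddCommGroup g] [Module ℚ g]
    (L : SuperLie g) (U : g) : Module.End ℚ g := L.bk U


section Aux
variable {g : Type*} [AddCommGroup g] [Module ℚ g]

/-- Leibniz rule for iterates of a derivation of a bilinear map. -/
theorem leibniz_pow_aux (bk : g →ₗ[ℚ] g →ₗ[ℚ] g) (D : Module.End ℚ g)
    (hder : ∀ b c, D (bk b c) = bk (D b) c + bk b (D c)) (n : ℕ) (b c : g) :
    (D ^ n) (bk b c)
      = ∑ i ∈ Finset.range (n + 1), (n.choose i : ℚ) • bk ((D ^ i) b) ((D ^ (n - i)) c) := by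
  induction n with
  | zero => simp
  | succ n ih =>
    have hDpow : ∀ (m : ℕ) (x : g), D ((D ^ m) x) = (D ^ (m + 1)) x := by
      intro m x; rw [pow_succ', Module.End.mul_apply]
    set B : ℕ → g := fun i => bk ((D ^ i) b) ((D ^ (n + 1 - i)) c) with hB
    have key : (D ^ (n + 1)) (bk b c)
        = (∑ i ∈ Finset.range (n + 1), (n.choose i : ℚ) • B (i + 1))
          + ∑ i ∈ Finset.range (n + 1), (n.choose i : ℚ) • B i := by
      rw [pow_succ', Module.End.mul_apply, ih, map_sum, ← Finset.sum_add_distrib]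
      apply Finset.sum_congr rfl
      intro i hi
      simp only [Finset.mem_range] at hi
      rw [map_smul, hder, smul_add, hDpow, hDpow]
      have e1 : n + 1 - (i + 1) = n - i := by omega
      have e2 : n - i + 1 = n + 1 - i := by omega
      rw [hB]; simp only; rw [e1, e2]
    rw [key]
    have expand : ∑ i ∈ Finset.range (n + 2), ((n + 1).choose i : ℚ) • B i
        = (∑ i ∈ Finset.range (n + 1), ((n + 1).choose (i + 1) : ℚ) • B (i + 1))
          + ((n + 1).choose 0 : ℚ) • B 0 :=
      Finset.sum_range_succ' (fun i => ((n + 1).choose i : ℚ) • B i) (n + 1)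
    have shift : ∑ i ∈ Finset.range (n + 1), (n.choose (i + 1) : ℚ) • B (i + 1)
        = ∑ i ∈ Finset.range (n + 1), (n.choose i : ℚ) • B i - (n.choose 0 : ℚ) • B 0 := by
      rw [Finset.sum_range_succ' (fun i => (n.choose i : ℚ) • B i) n]
      rw [Finset.sum_range_succ (fun i => (n.choose (i + 1) : ℚ) • B (i + 1)) n]
      simp [Nat.choose_succ_self]
    rw [expand]
    have split : ∀ i ∈ Finset.range (n + 1),
        (((n + 1).choose (i + 1) : ℚ)) • B (i + 1)
          = (n.choose i : ℚ) • B (i + 1) + (n.choose (i + 1) : ℚ) • B (i + 1) := by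
      intro i _
      rw [Nat.choose_succ_succ, Nat.cast_add, add_smul]
    rw [Finset.sum_congr rfl split, Finset.sum_add_distrib, shift]
    simp
    abel

end Aux

section Diag
variable {g : Type*} [AddCommGroup g] [Module ℚ g]

theorem diag_aux (bk : g →ₗ[ℚ] g →ₗ[ℚ] g) (D : Module.End ℚ g)
    (hder : ∀ b c, D (bk b c) = bk (D b) c + bk b (D c)) (V ℒ : g) (n : ℕ) :
    ∑ h ∈ Finset.range (n + 1),
        ((1 : ℚ) / (Nat.factorial (n + 1))) • (D ^ h) (bk V ((D ^ (n - h)) ℒ))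
      = ∑ h ∈ Finset.range (n + 1),
          (((1 : ℚ) / (Nat.factorial (h + 1))) * ((1 : ℚ) / (Nat.factorial (n - h)))) •
            bk ((D ^ h) V) ((D ^ (n - h)) ℒ) := by
  have step1 : ∀ h ∈ Finset.range (n + 1),
      ((1 : ℚ) / (Nat.factorial (n + 1))) • (D ^ h) (bk V ((D ^ (n - h)) ℒ))
        = ∑ i ∈ Finset.range (h + 1),
            (((1 : ℚ) / (Nat.factorial (n + 1))) * (h.choose i : ℚ)) •
              bk ((D ^ i) V) ((D ^ (n - i)) ℒ) := by
    intro h hh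
    simp only [Finset.mem_range] at hh
    rw [leibniz_pow_aux bk D hder h V ((D ^ (n - h)) ℒ), Finset.smul_sum]
    apply Finset.sum_congr rfl
    intro i hi
    simp only [Finset.mem_range] at hi
    have : (D ^ (h - i)) ((D ^ (n - h)) ℒ) = (D ^ (n - i)) ℒ := by
      rw [← Module.End.mul_apply, ← pow_add]
      congr 2
      omega
    rw [this, smul_smul]
  rw [Finset.sum_congr rfl step1]
  -- swap the order of summation
  rw [Finset.sum_comm' (s := Finset.range (n + 1)) (t := fun h => Finset.range (h + 1))
    (t' := Finset.range (n + 1)) (s' := fun i => Finset.Icc i n)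
    (by intro h i; simp only [Finset.mem_range, Finset.mem_Icc]; omega)]
  apply Finset.sum_congr rfl
  intro i hi
  simp only [Finset.mem_range] at hi
  rw [← Finset.sum_smul]
  congr 1
  have hs : ∑ h ∈ Finset.Icc i n, (((1 : ℚ) / (Nat.factorial (n + 1))) * (h.choose i : ℚ))
      = ((1 : ℚ) / (Nat.factorial (n + 1))) * (((n + 1).choose (i + 1) : ℚ)) := by
    rw [← Finset.mul_sum, ← Nat.cast_sum, Nat.sum_Icc_choose]
  rw [hs]
  have hfac : ((n + 1).choose (i + 1)) * Nat.factorial (i + 1) * Nat.factorial (n - i)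
      = Nat.factorial (n + 1) := by
    have := Nat.choose_mul_factorial_mul_factorial (show i + 1 ≤ n + 1 by omega)
    simpa [show n + 1 - (i + 1) = n - i by omega] using this
  have h1 : (Nat.factorial (n + 1) : ℚ) ≠ 0 := Nat.cast_ne_zero.2 (Nat.factorial_ne_zero _)
  have h2 : (Nat.factorial (i + 1) : ℚ) ≠ 0 := Nat.cast_ne_zero.2 (Nat.factorial_ne_zero _)
  have h3 : (Nat.factorial (n - i) : ℚ) ≠ 0 := Nat.cast_ne_zero.2 (Nat.factorial_ne_zero _)
  have hfacQ : (((n + 1).choose (i + 1) : ℚ)) * (Nat.factorial (i + 1) : ℚ) *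
      (Nat.factorial (n - i) : ℚ) = (Nat.factorial (n + 1) : ℚ) := by
    exact_mod_cast congrArg (Nat.cast : ℕ → ℚ) hfac
  field_simp
  linarith [hfacQ]

end Diag

/-- for U even with ad U nilpotent,
Σ_{h≥0} (1/(h+1)!) [(ad U)^h(V), e^{ad U}(ℒ)]
  = Σ_{h,k≥0} (1/(h+k+1)!) (ad U)^h (ad V) (ad U)^k (ℒ). -/
theorem exp_ad_differentiation_formula {g : Type*} [AddCommGroup g] [Module ℚ g]
    (L : SuperLie g) (U V ℒ : g) (hU : U ∈ L.g0)
    (hnil : ∃ N : ℕ, ∀ x : g, ((adOf L U) ^ N) x = 0) :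
    ∑ᶠ h : ℕ, ((1 : ℚ) / (Nat.factorial (h + 1))) •
        L.bk (((adOf L U) ^ h) V)
          (∑ᶠ n : ℕ, ((1 : ℚ) / (Nat.factorial n)) • ((adOf L U) ^ n) ℒ)
      = ∑ᶠ (h : ℕ) (k : ℕ), ((1 : ℚ) / (Nat.factorial (h + k + 1))) •
          ((adOf L U) ^ h) (L.bk V (((adOf L U) ^ k) ℒ)) := by
  classical
  obtain ⟨N, hN⟩ := hnil
  set D : Module.End ℚ g := adOf L U with hD
  -- vanishing of high powers
  have hD0 : ∀ n : ℕ, N ≤ n → ∀ x : g, (D ^ n) x = 0 := by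
    intro n hn x
    have : D ^ n = D ^ (n - N) * D ^ N := by rw [← pow_add]; congr 1; omega
    rw [this, Module.End.mul_apply, hN, map_zero]
  -- derivation property of D
  have hder : ∀ b c : g, D (L.bk b c) = L.bk (D b) c + L.bk b (D c) := by
    have hUhom : Homog L.g0 L.g1 U 0 := Or.inl ⟨rfl, hU⟩
    have hhom : ∀ (b : g) (pb : ℕ), Homog L.g0 L.g1 b pb → ∀ c : g,
        D (L.bk b c) = L.bk (D b) c + L.bk b (D c) := by
      intro b pb hb c
      have := L.jacobi U b c 0 pb hUhom hb
      simpa [hD, adOf] using this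
    intro b c
    obtain ⟨b0, hb0, b1, hb1, rfl⟩ :=
      Submodule.mem_sup.mp (by rw [L.compl.sup_eq_top]; trivial : b ∈ L.g0 ⊔ L.g1)
    have h0 := hhom b0 0 (Or.inl ⟨rfl, hb0⟩) c
    have h1 := hhom b1 1 (Or.inr ⟨rfl, hb1⟩) c
    simp only [map_add, LinearMap.add_apply] at *
    rw [h0, h1]; abel
  -- the two families of terms
  set F : ℕ × ℕ → g := fun p =>
    (((1 : ℚ) / (Nat.factorial (p.1 + 1))) * ((1 : ℚ) / (Nat.factorial p.2))) •
      L.bk ((D ^ p.1) V) ((D ^ p.2) ℒ) with hF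
  set G : ℕ × ℕ → g := fun p =>
    ((1 : ℚ) / (Nat.factorial (p.1 + p.2 + 1))) • (D ^ p.1) (L.bk V ((D ^ p.2) ℒ)) with hG
  have hF0 : ∀ p : ℕ × ℕ, N ≤ p.1 ∨ N ≤ p.2 → F p = 0 := by
    rintro ⟨h, k⟩ (hc | hc) <;> simp only [hF]
    · rw [hD0 h hc V]; simp
    · rw [hD0 k hc ℒ]; simp
  have hG0 : ∀ p : ℕ × ℕ, N ≤ p.1 ∨ N ≤ p.2 → G p = 0 := by
    rintro ⟨h, k⟩ (hc | hc) <;> simp only [hG]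
    · rw [hD0 h hc]; simp
    · rw [hD0 k hc ℒ]; simp
  -- reduce the finsums to finite sums
  have hinner : (∑ᶠ n : ℕ, ((1 : ℚ) / (Nat.factorial n)) • ((D) ^ n) ℒ)
      = ∑ n ∈ Finset.range N, ((1 : ℚ) / (Nat.factorial n)) • ((D) ^ n) ℒ := by
    apply finsum_eq_sum_of_support_subset
    intro n hn
    simp only [Function.mem_support, ne_eq] at hn
    simp only [Finset.coe_range, Set.mem_Iio]
    by_contra hc
    exact hn (by rw [hD0 n (by omega) ℒ, smul_zero])
  have hLHS : (∑ᶠ h : ℕ, ((1 : ℚ) / (Nat.factorial (h + 1))) •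
        L.bk ((D ^ h) V) (∑ᶠ n : ℕ, ((1 : ℚ) / (Nat.factorial n)) • (D ^ n) ℒ))
      = ∑ p ∈ Finset.range N ×ˢ Finset.range N, F p := by
    rw [hinner]
    rw [finsum_eq_sum_of_support_subset _ (s := Finset.range N) ?side]
    case side =>
      intro h hh
      simp only [Function.mem_support, ne_eq] at hh
      simp only [Finset.coe_range, Set.mem_Iio]
      by_contra hc
      exact hh (by rw [hD0 h (by omega) V, map_zero, LinearMap.zero_apply, smul_zero])
    rw [Finset.sum_product]
    apply Finset.sum_congr rfl
    intro h _
    rw [map_sum, Finset.smul_sum]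
    apply Finset.sum_congr rfl
    intro k _
    rw [map_smul, smul_smul]
  have hRHS : (∑ᶠ (h : ℕ) (k : ℕ), ((1 : ℚ) / (Nat.factorial (h + k + 1))) •
        (D ^ h) (L.bk V ((D ^ k) ℒ)))
      = ∑ p ∈ Finset.range N ×ˢ Finset.range N, G p := by
    have hin : ∀ h : ℕ, (∑ᶠ k : ℕ, ((1 : ℚ) / (Nat.factorial (h + k + 1))) •
        (D ^ h) (L.bk V ((D ^ k) ℒ))) = ∑ k ∈ Finset.range N, G (h, k) := by
      intro h
      apply finsum_eq_sum_of_support_subset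
      intro k hk
      simp only [Function.mem_support, ne_eq] at hk
      simp only [Finset.coe_range, Set.mem_Iio]
      by_contra hc
      exact hk (by rw [hD0 k (by omega) ℒ, map_zero, map_zero, smul_zero])
    rw [finsum_congr hin]
    rw [finsum_eq_sum_of_support_subset _ (s := Finset.range N) ?side2]
    case side2 =>
      intro h hh
      simp only [Function.mem_support, ne_eq] at hh
      simp only [Finset.coe_range, Set.mem_Iio]
      by_contra hc
      refine hh (Finset.sum_eq_zero fun k _ => ?_)
      simp only [hG]
      rw [hD0 h (by omega)]; simp
    rw [Finset.sum_product]
  rw [hLHS, hRHS]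
  -- extend both sums from the N×N square to the triangle {p.1 + p.2 < 2N}
  set T : Finset (ℕ × ℕ) :=
    (Finset.range (2 * N) ×ˢ Finset.range (2 * N)).filter (fun p => p.1 + p.2 < 2 * N) with hT
  have hsub : Finset.range N ×ˢ Finset.range N ⊆ T := by
    intro p hp
    simp only [Finset.mem_product, Finset.mem_range] at hp
    simp only [hT, Finset.mem_filter, Finset.mem_product, Finset.mem_range]
    omega
  have hext : ∀ (H : ℕ × ℕ → g), (∀ p : ℕ × ℕ, N ≤ p.1 ∨ N ≤ p.2 → H p = 0) →
      ∑ p ∈ Finset.range N ×ˢ Finset.range N, H p = ∑ p ∈ T, H p := by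
    intro H hH
    apply Finset.sum_subset hsub
    intro p hpT hpS
    simp only [hT, Finset.mem_filter, Finset.mem_product, Finset.mem_range] at hpT
    simp only [Finset.mem_product, Finset.mem_range] at hpS
    exact hH p (by omega)
  rw [hext F hF0, hext G hG0]
  -- reindex the triangle as a union of antidiagonals
  have hbij : ∀ (H : ℕ × ℕ → g), ∑ p ∈ T, H p
      = ∑ x ∈ (Finset.range (2 * N)).sigma (fun n => Finset.range (n + 1)),
          H (x.2, x.1 - x.2) := by
    intro H
    refine Finset.sum_nbij' (fun p => ⟨p.1 + p.2, p.1⟩) (fun x => (x.2, x.1 - x.2)) ?_ ?_ ?_ ?_ ?_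
    · intro p hp
      simp only [hT, Finset.mem_filter, Finset.mem_product, Finset.mem_range] at hp
      simp only [Finset.mem_sigma, Finset.mem_range]
      omega
    · intro x hx
      simp only [Finset.mem_sigma, Finset.mem_range] at hx
      simp only [hT, Finset.mem_filter, Finset.mem_product, Finset.mem_range]
      omega
    · intro p hp; simp
    · intro x hx
      simp only [Finset.mem_sigma, Finset.mem_range] at hx
      ext <;> simp <;> omega
    · intro p hp
      simp only [hT, Finset.mem_filter, Finset.mem_product, Finset.mem_range] at hp
      simp
  rw [hbij F, hbij G, Finset.sum_sigma, Finset.sum_sigma]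
  apply Finset.sum_congr rfl
  intro n _
  have := diag_aux L.bk D hder V ℒ n
  have eG : ∀ h ∈ Finset.range (n + 1), G (h, n - h)
      = ((1 : ℚ) / (Nat.factorial (n + 1))) • (D ^ h) (L.bk V ((D ^ (n - h)) ℒ)) := by
    intro h hh
    simp only [Finset.mem_range] at hh
    simp only [hG]
    rw [show h + (n - h) + 1 = n + 1 by omega]
  rw [Finset.sum_congr rfl eG, this]
end
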